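/- Under the β-order neighborhood model with |Y_i(z)| ≤ Y_max for all i and z, independent Bernoulli treatments with p_j ∈ [p, 1−p], maximum in-degree d_in and out-degree d_out, the variance of the SNIPE estimator is at most (d_in · d_out · Y_max² / n) · ( (e·d_in/β) · max(4β², 1/(p(1−p))) )^β. -/

import Mathlib

open Finset Real

/-!
Write the estimator as `(1/n) ∑ᵢ Xᵢ` with `Xᵢ = Yᵢ · Hᵢ`. Each `Xᵢ` is a function of the treatments
in `Nᵢ` only, so `Cov(Xᵢ, Xᵢ')` vanishes unless `Nᵢ ∩ Nᵢ'` is nonempty, which happens for at most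
`d_in · d_out` indices `i'`, and every other covariance is at most the common bound on `E[Xᵢ²]`.
For that bound, `|Yᵢ| ≤ Y_max`, and the products `∏_{j ∈ S} (z_j - p_j) / (p_j (1 - p_j))` are
orthogonal with second moments `∏_{j ∈ S} 1 / (p_j (1 - p_j)) ≤ (1 / (p (1 - p)))^|S|`; since
`g(∅) = 0` and `|g(S)| ≤ 1`, what remains is the binomial estimate
`∑_{k=1}^{β} C(d, k) M^k ≤ (e d M / β)^β` for `M ≥ β`.
-/

/-- Value of a Bernoulli treatment bit as a real number. -/
noncomputable def zval : Bool → ℝ := fun b => if b then 1 else 0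

/-- Expectation of `f` under `n` mutually independent Bernoulli(`p j`) bits. -/
noncomputable def bexp {n : ℕ} (p : Fin n → ℝ) (f : (Fin n → Bool) → ℝ) : ℝ :=
  ∑ z : Fin n → Bool, (∏ j, if z j then p j else 1 - p j) * f z

/-- The SNIPE coefficient function `g`. -/
noncomputable def gcoef {n : ℕ} (p : Fin n → ℝ) (S : Finset (Fin n)) : ℝ :=
  if S.Nonempty then (∏ s ∈ S, (1 - p s)) - ∏ s ∈ S, (-p s) else 0

noncomputable def bweight {n : ℕ} (p : Fin n → ℝ) (z : Fin n → Bool) : ℝ :=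
  ∏ j, if z j then p j else 1 - p j

noncomputable def bvar {n : ℕ} (p : Fin n → ℝ) (f : (Fin n → Bool) → ℝ) : ℝ :=
  bexp p (fun z => f z ^ 2) - bexp p f ^ 2

noncomputable def bcov {n : ℕ} (p : Fin n → ℝ) (f g : (Fin n → Bool) → ℝ) : ℝ :=
  bexp p (fun z => f z * g z) - bexp p f * bexp p g

section Expectation

variable {n : ℕ} (p : Fin n → ℝ)

lemma bexp_eq_sum_bweight (f : (Fin n → Bool) → ℝ) :
    bexp p f = ∑ z, bweight p z * f z := rfl

lemma bexp_prod (T : Finset (Fin n)) (F : Fin n → Bool → ℝ) :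
    bexp p (fun z => ∏ j ∈ T, F j (z j)) =
      ∏ j ∈ T, (p j * F j true + (1 - p j) * F j false) := by
  classical
  set G : Fin n → Bool → ℝ := fun j b => (if b then p j else 1 - p j) * if j ∈ T then F j b else 1
  have hG : ∀ j, ∑ b, G j b = if j ∈ T then p j * F j true + (1 - p j) * F j false else 1 := by
    intro j
    split_ifs <;> simp [G, *]
  calc bexp p (fun z => ∏ j ∈ T, F j (z j)) = ∑ z : Fin n → Bool, ∏ j, G j (z j) := by
        simp only [bexp, G, prod_mul_distrib, Fintype.prod_ite_mem]
    _ = _ := by rw [← Fintype.prod_sum G]; simp only [hG, Fintype.prod_ite_mem]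

lemma sum_bweight : ∑ z, bweight p z = 1 := by
  simpa [bexp_eq_sum_bweight] using bexp_prod p ∅ (fun _ _ => 1)

lemma bexp_const (a : ℝ) : bexp p (fun _ => a) = a := by
  rw [bexp_eq_sum_bweight, ← sum_mul, sum_bweight, one_mul]

lemma bexp_const_mul (a : ℝ) (f : (Fin n → Bool) → ℝ) :
    bexp p (fun z => a * f z) = a * bexp p f := by
  simp only [bexp, mul_sum, mul_left_comm]

lemma bexp_add (f g : (Fin n → Bool) → ℝ) :
    bexp p (fun z => f z + g z) = bexp p f + bexp p g := by
  simp only [bexp, mul_add, sum_add_distrib]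

lemma bexp_sub (f g : (Fin n → Bool) → ℝ) :
    bexp p (fun z => f z - g z) = bexp p f - bexp p g := by
  simp only [bexp, mul_sub, sum_sub_distrib]

lemma bexp_sum {ι : Type*} (s : Finset ι) (f : ι → (Fin n → Bool) → ℝ) :
    bexp p (fun z => ∑ i ∈ s, f i z) = ∑ i ∈ s, bexp p (f i) := by
  simp only [bexp, mul_sum]
  exact sum_comm

variable {p}

lemma bweight_nonneg (hp : ∀ j, 0 ≤ p j ∧ p j ≤ 1) (z : Fin n → Bool) : 0 ≤ bweight p z :=
  prod_nonneg fun j _ => by split_ifs <;> linarith [hp j]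

lemma bexp_mono (hp : ∀ j, 0 ≤ p j ∧ p j ≤ 1) {f g : (Fin n → Bool) → ℝ}
    (h : ∀ z, f z ≤ g z) : bexp p f ≤ bexp p g :=
  sum_le_sum fun z _ => mul_le_mul_of_nonneg_left (h z) (bweight_nonneg hp z)

lemma bexp_nonneg (hp : ∀ j, 0 ≤ p j ∧ p j ≤ 1) {f : (Fin n → Bool) → ℝ}
    (h : ∀ z, 0 ≤ f z) : 0 ≤ bexp p f :=
  (bexp_const p 0).symm.le.trans (bexp_mono hp h)

end Expectation

section Covariance

variable {n : ℕ} {p : Fin n → ℝ}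

lemma bweight_piecewise_mul_bweight_piecewise (A : Finset (Fin n)) (u v : Fin n → Bool) :
    bweight p (A.piecewise u v) * bweight p (A.piecewise v u) = bweight p u * bweight p v := by
  simp only [bweight, ← prod_mul_distrib]
  refine prod_congr rfl fun j _ => ?_
  by_cases hj : j ∈ A <;> simp [hj, mul_comm]

/-- Swapping the `A`-coordinates of two independent copies `(u, v)` preserves their joint weight
and turns `f u * g v` into `f u * g u`. -/
lemma bexp_mul_of_dependsOn_compl (A : Finset (Fin n)) {f g : (Fin n → Bool) → ℝ}
    (hf : DependsOn f (A : Set (Fin n))) (hg : DependsOn g (A : Set (Fin n))ᶜ) :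
    bexp p (fun z => f z * g z) = bexp p f * bexp p g := by
  classical
  set σ : (Fin n → Bool) × (Fin n → Bool) → (Fin n → Bool) × (Fin n → Bool) :=
    fun x => (A.piecewise x.1 x.2, A.piecewise x.2 x.1)
  have hσ : Function.Involutive σ := fun x => by
    ext j <;> by_cases hj : j ∈ A <;> simp [σ, hj]
  have hfσ : ∀ u v, f (A.piecewise u v) = f u :=
    fun u v => hf fun j hj => piecewise_eq_of_mem _ _ _ (mem_coe.1 hj)
  have hgσ : ∀ u v, g (A.piecewise v u) = g u :=
    fun u v => hg fun j hj => piecewise_eq_of_notMem _ _ _ (fun h => hj (mem_coe.2 h))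
  calc bexp p (fun z => f z * g z)
      = ∑ x : (Fin n → Bool) × (Fin n → Bool),
          bweight p x.1 * bweight p x.2 * (f x.1 * g x.1) := by
        rw [bexp_eq_sum_bweight, Fintype.sum_prod_type]
        exact sum_congr rfl fun u _ => by
          dsimp only; rw [← sum_mul, ← mul_sum, sum_bweight, mul_one]
    _ = ∑ x : (Fin n → Bool) × (Fin n → Bool),
          bweight p x.1 * bweight p x.2 * (f x.1 * g x.2) :=
        Fintype.sum_bijective σ hσ.bijective _ _ fun x => by
          simp only [σ, bweight_piecewise_mul_bweight_piecewise, hfσ, hgσ]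
    _ = bexp p f * bexp p g := by
        simp only [bexp_eq_sum_bweight, sum_mul_sum, Fintype.sum_prod_type]
        exact sum_congr rfl fun u _ => sum_congr rfl fun v _ => by ring

lemma bcov_eq_zero_of_dependsOn_compl (A : Finset (Fin n)) {f g : (Fin n → Bool) → ℝ}
    (hf : DependsOn f (A : Set (Fin n))) (hg : DependsOn g (A : Set (Fin n))ᶜ) :
    bcov p f g = 0 :=
  sub_eq_zero.2 (bexp_mul_of_dependsOn_compl A hf hg)

lemma bexp_sub_const_sq (f : (Fin n → Bool) → ℝ) (a : ℝ) :
    bexp p (fun z => (f z - a) ^ 2) = bvar p f + (bexp p f - a) ^ 2 := by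
  have h : (fun z => (f z - a) ^ 2) = fun z => f z ^ 2 + (a ^ 2 - 2 * a * f z) := by
    funext z; ring
  rw [h, bexp_add, bexp_sub, bexp_const, bexp_const_mul, bvar]
  ring

lemma bvar_nonneg (hp : ∀ j, 0 ≤ p j ∧ p j ≤ 1) (f : (Fin n → Bool) → ℝ) : 0 ≤ bvar p f := by
  simpa [bexp_sub_const_sq] using bexp_nonneg hp fun z => sq_nonneg (f z - bexp p f)

lemma bvar_le_bexp_sq (f : (Fin n → Bool) → ℝ) : bvar p f ≤ bexp p (fun z => f z ^ 2) :=
  sub_le_self _ (sq_nonneg _)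

lemma bvar_sub (f g : (Fin n → Bool) → ℝ) :
    bvar p (fun z => f z - g z) = bvar p f + bvar p g - 2 * bcov p f g := by
  have h : (fun z => (f z - g z) ^ 2) = fun z => f z ^ 2 + g z ^ 2 - 2 * (f z * g z) := by
    funext z; ring
  simp only [bvar, bcov, h, bexp_sub, bexp_add, bexp_const_mul]
  ring

lemma bcov_le (hp : ∀ j, 0 ≤ p j ∧ p j ≤ 1) {f g : (Fin n → Bool) → ℝ} {K : ℝ}
    (hf : bexp p (fun z => f z ^ 2) ≤ K) (hg : bexp p (fun z => g z ^ 2) ≤ K) :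
    bcov p f g ≤ K := by
  have h := bvar_nonneg hp (fun z => f z - g z)
  rw [bvar_sub] at h
  linarith [bvar_le_bexp_sq (p := p) f, bvar_le_bexp_sq (p := p) g]

lemma bvar_const_mul (a : ℝ) (f : (Fin n → Bool) → ℝ) :
    bvar p (fun z => a * f z) = a ^ 2 * bvar p f := by
  simp only [bvar, mul_pow, bexp_const_mul]
  ring

lemma bvar_sum {ι : Type*} (s : Finset ι) (X : ι → (Fin n → Bool) → ℝ) :
    bvar p (fun z => ∑ i ∈ s, X i z) = ∑ i ∈ s, ∑ i' ∈ s, bcov p (X i) (X i') := by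
  simp only [bvar, bcov, sq, sum_mul_sum, bexp_sum, sum_sub_distrib]

end Covariance

lemma card_filter_inter_nonempty_le {ι α : Type*} [Fintype ι] [DecidableEq α]
    (N : ι → Finset α) (i : ι) {din dout : ℕ} (hdin : #(N i) ≤ din)
    (hdout : ∀ j, #{i' | j ∈ N i'} ≤ dout) :
    #{i' | (N i ∩ N i').Nonempty} ≤ din * dout := by
  classical
  calc #{i' | (N i ∩ N i').Nonempty}
      ≤ #((N i).biUnion fun j => {i' | j ∈ N i'}) := card_le_card fun i' hi' => by
        obtain ⟨j, hj⟩ := (mem_filter.1 hi').2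
        exact mem_biUnion.2 ⟨j, (mem_inter.1 hj).1, mem_filter.2 ⟨mem_univ _, (mem_inter.1 hj).2⟩⟩
    _ ≤ ∑ j ∈ N i, #{i' | j ∈ N i'} := card_biUnion_le
    _ ≤ #(N i) * dout := sum_le_card_nsmul _ _ _ fun j _ => hdout j
    _ ≤ din * dout := Nat.mul_le_mul_right _ hdin

theorem bvar_sum_le_of_dependsOn {n : ℕ} {p : Fin n → ℝ} (hp : ∀ j, 0 ≤ p j ∧ p j ≤ 1)
    {ι : Type*} [Fintype ι] (N : ι → Finset (Fin n)) (X : ι → (Fin n → Bool) → ℝ)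
    (hX : ∀ i, DependsOn (X i) (N i : Set (Fin n))) {D K : ℝ}
    (hD : ∀ i, (#{i' | (N i ∩ N i').Nonempty} : ℝ) ≤ D)
    (hK : ∀ i, bexp p (fun z => X i z ^ 2) ≤ K) :
    bvar p (fun z => ∑ i, X i z) ≤ Fintype.card ι * D * K := by
  classical
  have hrow : ∀ i, ∑ i', bcov p (X i) (X i') ≤ D * K := by
    intro i
    have hK0 : 0 ≤ K := (bexp_nonneg hp fun z => sq_nonneg (X i z)).trans (hK i)
    have hdisj : ∀ i', ¬ (N i ∩ N i').Nonempty → bcov p (X i) (X i') = 0 := by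
      intro i' h
      refine bcov_eq_zero_of_dependsOn_compl (N i) (hX i) ((hX i').mono fun j hj hj' => h ?_)
      exact ⟨j, mem_inter.2 ⟨hj', hj⟩⟩
    calc ∑ i', bcov p (X i) (X i')
        = ∑ i' with (N i ∩ N i').Nonempty, bcov p (X i) (X i') :=
          (sum_filter_of_ne fun i' _ h => not_not.1 (mt (hdisj i') h)).symm
      _ ≤ #{i' | (N i ∩ N i').Nonempty} • K :=
          sum_le_card_nsmul _ _ _ fun i' _ => bcov_le hp (hK i) (hK i')
      _ ≤ D * K := by rw [nsmul_eq_mul]; exact mul_le_mul_of_nonneg_right (hD i) hK0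
  calc bvar p (fun z => ∑ i, X i z) = ∑ i, ∑ i', bcov p (X i) (X i') := bvar_sum _ X
    _ ≤ ∑ _i : ι, D * K := sum_le_sum fun i _ => hrow i
    _ = Fintype.card ι * D * K := by rw [sum_const, card_univ, nsmul_eq_mul, mul_assoc]

noncomputable def ipw {n : ℕ} (p : Fin n → ℝ) (j : Fin n) (b : Bool) : ℝ :=
  (zval b - p j) / (p j * (1 - p j))

section InversePropensity

variable {n : ℕ} {p : Fin n → ℝ}

lemma ipw_mean {j : Fin n} (hp : 0 < p j ∧ p j < 1) :
    p j * ipw p j true + (1 - p j) * ipw p j false = 0 := by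
  have : 1 - p j ≠ 0 := by linarith
  simp only [ipw, zval, if_true, Bool.false_eq_true, if_false]
  field_simp
  ring

lemma ipw_sq_mean {j : Fin n} (hp : 0 < p j ∧ p j < 1) :
    p j * (ipw p j true * ipw p j true) + (1 - p j) * (ipw p j false * ipw p j false) =
      (p j * (1 - p j))⁻¹ := by
  have : 1 - p j ≠ 0 := by linarith
  have : p j ≠ 0 := hp.1.ne'
  simp only [ipw, zval, if_true, Bool.false_eq_true, if_false]
  field_simp
  ring

lemma bexp_ipw_prod_mul_ipw_prod_of_mem_of_notMem (hp : ∀ j, 0 < p j ∧ p j < 1)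
    {S S' : Finset (Fin n)} {j : Fin n} (hj : j ∈ S) (hj' : j ∉ S') :
    bexp p (fun z => (∏ k ∈ S, ipw p k (z k)) * ∏ k ∈ S', ipw p k (z k)) = 0 := by
  have hrest : DependsOn (fun z : Fin n → Bool => (∏ k ∈ S.erase j, ipw p k (z k)) *
      ∏ k ∈ S', ipw p k (z k)) (({j} : Finset (Fin n)) : Set (Fin n))ᶜ := by
    intro z z' h
    dsimp only
    congr 1 <;> refine prod_congr rfl fun k hk => congrArg _ (h k ?_)
    · simpa using ne_of_mem_erase hk
    · simpa using ne_of_mem_of_not_mem hk hj'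
  have hmean : bexp p (fun z => ipw p j (z j)) = 0 := by
    simpa [ipw_mean (hp j)] using bexp_prod p {j} (ipw p)
  simp_rw [← mul_prod_erase S _ hj, mul_assoc]
  rw [bexp_mul_of_dependsOn_compl {j} (fun z z' h => congrArg _ (h j (mem_singleton_self j))) hrest,
    hmean, zero_mul]

lemma bexp_ipw_prod_mul_ipw_prod (hp : ∀ j, 0 < p j ∧ p j < 1) (S S' : Finset (Fin n)) :
    bexp p (fun z => (∏ k ∈ S, ipw p k (z k)) * ∏ k ∈ S', ipw p k (z k)) =
      if S = S' then ∏ k ∈ S, (p k * (1 - p k))⁻¹ else 0 := by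
  split_ifs with h
  · subst h
    simp_rw [← prod_mul_distrib]
    rw [bexp_prod p S (fun k b => ipw p k b * ipw p k b)]
    exact prod_congr rfl fun k _ => ipw_sq_mean (hp k)
  · obtain ⟨j, hj, hj'⟩ | ⟨j, hj', hj⟩ : (∃ j ∈ S, j ∉ S') ∨ ∃ j ∈ S', j ∉ S := by
      by_contra! h'
      exact h (Subset.antisymm h'.1 h'.2)
    · exact bexp_ipw_prod_mul_ipw_prod_of_mem_of_notMem hp hj hj'
    · simp_rw [mul_comm (∏ k ∈ S, _)]
      exact bexp_ipw_prod_mul_ipw_prod_of_mem_of_notMem hp hj' hj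

lemma bexp_sq_sum_mul_ipw_prod (hp : ∀ j, 0 < p j ∧ p j < 1) (s : Finset (Finset (Fin n)))
    (a : Finset (Fin n) → ℝ) :
    bexp p (fun z => (∑ S ∈ s, a S * ∏ k ∈ S, ipw p k (z k)) ^ 2) =
      ∑ S ∈ s, a S ^ 2 * ∏ k ∈ S, (p k * (1 - p k))⁻¹ := by
  have h : ∀ z : Fin n → Bool, (∑ S ∈ s, a S * ∏ k ∈ S, ipw p k (z k)) ^ 2 =
      ∑ S ∈ s, ∑ S' ∈ s, a S * a S' *
        ((∏ k ∈ S, ipw p k (z k)) * ∏ k ∈ S', ipw p k (z k)) := by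
    intro z
    rw [sq, sum_mul_sum]
    exact sum_congr rfl fun S _ => sum_congr rfl fun S' _ => by ring
  simp only [h, bexp_sum, bexp_const_mul, bexp_ipw_prod_mul_ipw_prod hp, mul_ite, mul_zero,
    sum_ite_eq]
  exact sum_congr rfl fun S hS => by rw [if_pos hS, sq]

end InversePropensity

lemma gcoef_sq_le_one {n : ℕ} {p : Fin n → ℝ} (hp : ∀ j, 0 ≤ p j ∧ p j ≤ 1)
    (S : Finset (Fin n)) : gcoef p S ^ 2 ≤ 1 := by
  rw [gcoef]
  split_ifs with hS
  · obtain ⟨s, hs⟩ := hS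
    have hA : ∏ k ∈ S, (1 - p k) ∈ Set.Icc 0 (1 - p s) := by
      rw [← mul_prod_erase S _ hs]
      exact ⟨mul_nonneg (by linarith [hp s]) (prod_nonneg fun k _ => by linarith [hp k]),
        mul_le_of_le_one_right (by linarith [hp s])
          (prod_le_one (fun k _ => by linarith [hp k]) fun k _ => by linarith [hp k])⟩
    have hB : |∏ k ∈ S, (-p k)| ≤ p s := by
      rw [abs_prod, ← mul_prod_erase S _ hs]
      simp only [abs_neg, abs_of_nonneg (hp _).1]
      exact mul_le_of_le_one_right (hp s).1 (prod_le_one (fun k _ => (hp k).1) fun k _ => (hp k).2)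
    rw [sq_le_one_iff_abs_le_one, abs_le]
    constructor <;> linarith [abs_le.1 hB, hA.1, hA.2, hp s]
  · norm_num

lemma inv_mul_one_sub_le {p q : ℝ} (hq : 0 < q) (hp : q ≤ p ∧ p ≤ 1 - q) :
    (p * (1 - p))⁻¹ ≤ (q * (1 - q))⁻¹ :=
  inv_anti₀ (mul_pos hq (by linarith)) (by nlinarith)

theorem Finset.sum_filter_powerset_card_le {α M : Type*} [AddCommMonoid M] (T : Finset α)
    (β : ℕ) (f : ℕ → M) :
    ∑ S ∈ T.powerset with #S ≤ β, f #S = ∑ m ∈ range (β + 1), (#T).choose m • f m := by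
  rw [← sum_fiberwise_of_maps_to (g := card) (t := range (β + 1))
    fun S hS => mem_range.2 (Nat.lt_succ_of_le (mem_filter.1 hS).2)]
  refine sum_congr rfl fun m hm => ?_
  rw [← card_powersetCard, ← sum_const]
  refine sum_congr ?_ fun S hS => by rw [(mem_powersetCard.1 hS).2]
  ext S
  simp only [mem_filter, mem_powerset, mem_powersetCard]
  have hmβ := mem_range.1 hm
  constructor
  · rintro ⟨⟨hST, -⟩, rfl⟩; exact ⟨hST, rfl⟩
  · rintro ⟨hST, rfl⟩; exact ⟨⟨hST, by omega⟩, rfl⟩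

lemma sum_choose_mul_pow_le_one_add_pow (d : ℕ) (s : Finset ℕ) {t : ℝ} (ht : 0 ≤ t) :
    ∑ k ∈ s, (d.choose k : ℝ) * t ^ k ≤ (1 + t) ^ d := by
  calc ∑ k ∈ s, (d.choose k : ℝ) * t ^ k ≤ ∑ k ∈ s ∪ range (d + 1), (d.choose k : ℝ) * t ^ k :=
        sum_le_sum_of_subset_of_nonneg subset_union_left fun k _ _ => by positivity
    _ = ∑ k ∈ range (d + 1), (d.choose k : ℝ) * t ^ k := by
        refine (sum_subset subset_union_right fun k _ hk => ?_).symm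
        rw [Nat.choose_eq_zero_of_lt (by simpa using hk), Nat.cast_zero, zero_mul]
    _ = (1 + t) ^ d := by
        rw [add_comm (1 : ℝ), add_pow]
        exact sum_congr rfl fun k _ => by ring

/-- With `r = d M / β ≥ 1`, each term satisfies `C(d,k) M^k ≤ r^β C(d,k) (β/d)^k`, and the
binomial theorem bounds the sum of the latter by `r^β (1 + β/d)^d ≤ r^β e^β`. -/
lemma sum_choose_mul_pow_le_exp_mul_pow (d β : ℕ) {M : ℝ} (hM : (β : ℝ) ≤ M) :
    ∑ k ∈ range β, (d.choose (k + 1) : ℝ) * M ^ (k + 1) ≤ (exp 1 * d / β * M) ^ β := by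
  rcases Nat.eq_zero_or_pos β with rfl | hβ
  · simp
  rcases Nat.eq_zero_or_pos d with rfl | hd
  · simp [Nat.choose_eq_zero_of_lt]
  have hβ' : (0 : ℝ) < β := Nat.cast_pos.2 hβ
  have hd' : (0 : ℝ) < d := Nat.cast_pos.2 hd
  set r := d * M / β
  have hM0 : 0 < M := hβ'.trans_le hM
  have hr : 1 ≤ r := by
    rw [le_div_iff₀ hβ', one_mul]
    exact hM.trans (le_mul_of_one_le_left hM0.le (by exact_mod_cast hd))
  have hterm : ∀ k ∈ range β, (d.choose (k + 1) : ℝ) * M ^ (k + 1) ≤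
      r ^ β * ((d.choose (k + 1) : ℝ) * (β / d) ^ (k + 1)) := by
    intro k hk
    have hMr : M = r * (β / d) := by simp only [r]; field_simp
    calc (d.choose (k + 1) : ℝ) * M ^ (k + 1)
        = r ^ (k + 1) * ((d.choose (k + 1) : ℝ) * (β / d) ^ (k + 1)) := by rw [hMr]; ring
      _ ≤ r ^ β * ((d.choose (k + 1) : ℝ) * (β / d) ^ (k + 1)) :=
        mul_le_mul_of_nonneg_right (pow_le_pow_right₀ hr (mem_range.1 hk))
          (by positivity)
  calc ∑ k ∈ range β, (d.choose (k + 1) : ℝ) * M ^ (k + 1)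
      ≤ r ^ β * ∑ k ∈ (range β).map (addRightEmbedding 1), (d.choose k : ℝ) * (β / d) ^ k := by
        rw [sum_map, mul_sum]; exact sum_le_sum hterm
    _ ≤ r ^ β * (1 + β / d) ^ d :=
        mul_le_mul_of_nonneg_left (sum_choose_mul_pow_le_one_add_pow d _ (by positivity))
          (by positivity)
    _ ≤ r ^ β * exp β := by
        gcongr
        calc (1 + (β : ℝ) / d) ^ d ≤ exp (β / d) ^ d := by
              gcongr; linarith [add_one_le_exp ((β : ℝ) / d)]
          _ = exp β := by rw [← exp_nat_mul]; field_simp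
    _ = (exp 1 * d / β * M) ^ β := by
        rw [← exp_one_pow, ← mul_pow]; simp only [r]; ring

lemma sum_gcoef_sq_mul_prod_le {n : ℕ} {p : Fin n → ℝ} {q : ℝ} (hq : 0 < q)
    (hp : ∀ j, q ≤ p j ∧ p j ≤ 1 - q) (T : Finset (Fin n)) (β : ℕ) {d : ℕ} (hT : #T ≤ d) :
    ∑ S ∈ T.powerset with #S ≤ β, gcoef p S ^ 2 * ∏ k ∈ S, (p k * (1 - p k))⁻¹ ≤
      (exp 1 * d / β * max (4 * (β : ℝ) ^ 2) (q * (1 - q))⁻¹) ^ β := by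
  have hp01 : ∀ j, 0 ≤ p j ∧ p j ≤ 1 := fun j => ⟨hq.le.trans (hp j).1, by linarith [hp j]⟩
  set M := max (4 * (β : ℝ) ^ 2) (q * (1 - q))⁻¹
  have hM0 : 0 ≤ M := le_max_of_le_left (by positivity)
  have hβM : (β : ℝ) ≤ M := le_max_of_le_left (by norm_cast; nlinarith [Nat.le_mul_self β])
  have hterm : ∀ S : Finset (Fin n),
      gcoef p S ^ 2 * ∏ k ∈ S, (p k * (1 - p k))⁻¹ ≤ if #S = 0 then 0 else M ^ #S := by
    intro S
    split_ifs with hS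
    · simp [card_eq_zero.1 hS, gcoef]
    · have hfactor0 : ∀ k ∈ S, 0 ≤ (p k * (1 - p k))⁻¹ :=
        fun k _ => inv_nonneg.2 (mul_nonneg (hp01 k).1 (by linarith [hp01 k]))
      have hfactor : ∀ k ∈ S, (p k * (1 - p k))⁻¹ ≤ M :=
        fun k _ => (inv_mul_one_sub_le hq (hp k)).trans (le_max_right _ _)
      have hprod : ∏ k ∈ S, (p k * (1 - p k))⁻¹ ≤ M ^ #S := by
        rw [← prod_const]
        exact prod_le_prod hfactor0 hfactor
      simpa using mul_le_mul (gcoef_sq_le_one hp01 S) hprod (prod_nonneg hfactor0) zero_le_one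
  calc ∑ S ∈ T.powerset with #S ≤ β, gcoef p S ^ 2 * ∏ k ∈ S, (p k * (1 - p k))⁻¹
      ≤ ∑ S ∈ T.powerset with #S ≤ β, if #S = 0 then 0 else M ^ #S := sum_le_sum fun S _ => hterm S
    _ = ∑ m ∈ range (β + 1), (#T).choose m • if m = 0 then 0 else M ^ m :=
        sum_filter_powerset_card_le T β fun m => if m = 0 then 0 else M ^ m
    _ = ∑ m ∈ range β, ((#T).choose (m + 1) : ℝ) * M ^ (m + 1) := by
        simp [sum_range_succ']
    _ ≤ ∑ m ∈ range β, (d.choose (m + 1) : ℝ) * M ^ (m + 1) := by gcongr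
    _ ≤ (exp 1 * d / β * M) ^ β := sum_choose_mul_pow_le_exp_mul_pow d β hβM

lemma abs_sum_mul_prod_zval_le {n : ℕ} (s : Finset (Finset (Fin n))) (c : Finset (Fin n) → ℝ)
    (z : Fin n → Bool) : |∑ S ∈ s, c S * ∏ j ∈ S, zval (z j)| ≤ ∑ S ∈ s, |c S| := by
  refine (abs_sum_le_sum_abs _ _).trans (sum_le_sum fun S _ => ?_)
  rw [abs_mul, abs_prod]
  refine mul_le_of_le_one_right (abs_nonneg _) (prod_le_one (fun _ _ => abs_nonneg _) fun j _ => ?_)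
  unfold zval
  split_ifs <;> simp

lemma bexp_sq_mul_sum_gcoef_mul_ipw_prod_le {n : ℕ} {p : Fin n → ℝ} {q : ℝ} (hq : 0 < q)
    (hp : ∀ j, q ≤ p j ∧ p j ≤ 1 - q) {T : Finset (Fin n)} {β d : ℕ} (hT : #T ≤ d)
    (c : Finset (Fin n) → ℝ) {Ymax : ℝ} (hY : ∑ S ∈ T.powerset with #S ≤ β, |c S| ≤ Ymax) :
    bexp p (fun z => ((∑ S ∈ T.powerset with #S ≤ β, c S * ∏ j ∈ S, zval (z j)) *
        ∑ S ∈ T.powerset with #S ≤ β, gcoef p S * ∏ j ∈ S, ipw p j (z j)) ^ 2) ≤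
      Ymax ^ 2 * (exp 1 * d / β * max (4 * (β : ℝ) ^ 2) (q * (1 - q))⁻¹) ^ β := by
  have hp' : ∀ j, 0 < p j ∧ p j < 1 := fun j => ⟨hq.trans_le (hp j).1, by linarith [hp j]⟩
  have hp01 : ∀ j, 0 ≤ p j ∧ p j ≤ 1 := fun j => ⟨(hp' j).1.le, (hp' j).2.le⟩
  calc _ ≤ bexp p (fun z => Ymax ^ 2 *
        (∑ S ∈ T.powerset with #S ≤ β, gcoef p S * ∏ j ∈ S, ipw p j (z j)) ^ 2) := by
        refine bexp_mono hp01 fun z => ?_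
        rw [mul_pow]
        refine mul_le_mul_of_nonneg_right ?_ (sq_nonneg _)
        simpa only [sq_abs] using
          pow_le_pow_left₀ (abs_nonneg _) ((abs_sum_mul_prod_zval_le _ c z).trans hY) 2
    _ = Ymax ^ 2 * ∑ S ∈ T.powerset with #S ≤ β, gcoef p S ^ 2 * ∏ k ∈ S, (p k * (1 - p k))⁻¹ := by
        rw [bexp_const_mul, bexp_sq_sum_mul_ipw_prod hp']
    _ ≤ _ := mul_le_mul_of_nonneg_left (sum_gcoef_sq_mul_prod_le hq hp T β hT) (sq_nonneg _)

lemma dependsOn_sum_mul_prod {α γ : Type*} (s : Finset (Finset α)) (a : Finset α → ℝ)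
    (F : α → γ → ℝ) {T : Finset α} (hs : ∀ S ∈ s, S ⊆ T) :
    DependsOn (fun z : α → γ => ∑ S ∈ s, a S * ∏ j ∈ S, F j (z j)) (T : Set α) :=
  fun _ _ h => sum_congr rfl fun S hS =>
    congrArg _ (prod_congr rfl fun j hj => congrArg _ (h j (hs S hS hj)))

lemma DependsOn.mul {ι γ M : Type*} [Mul M] {f g : (ι → γ) → M} {s : Set ι} (hf : DependsOn f s)
    (hg : DependsOn g s) : DependsOn (fun z => f z * g z) s :=
  fun _ _ h => congrArg₂ (· * ·) (hf h) (hg h)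

theorem stmt13_general {n : ℕ} (p : Fin n → ℝ) (q : ℝ) (hq : 0 < q)
    (hp : ∀ j, q ≤ p j ∧ p j ≤ 1 - q)
    (N : Fin n → Finset (Fin n)) (β din dout : ℕ)
    (hdin : ∀ i, (N i).card ≤ din)
    (hdout : ∀ j, (Finset.univ.filter (fun i => j ∈ N i)).card ≤ dout)
    (c : Fin n → Finset (Fin n) → ℝ) (Ymax : ℝ)
    (hY : ∀ i, ∑ S' ∈ (N i).powerset.filter (fun S => S.card ≤ β), |c i S'| ≤ Ymax) :
    bexp p (fun z => ((1 / (n : ℝ)) * ∑ i,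
        (∑ S' ∈ (N i).powerset.filter (fun S => S.card ≤ β),
          c i S' * ∏ j ∈ S', zval (z j)) *
        (∑ S ∈ (N i).powerset.filter (fun S => S.card ≤ β),
          gcoef p S * ∏ j ∈ S, ((zval (z j) - p j) / (p j * (1 - p j))))) ^ 2)
      - (bexp p (fun z => (1 / (n : ℝ)) * ∑ i,
        (∑ S' ∈ (N i).powerset.filter (fun S => S.card ≤ β),
          c i S' * ∏ j ∈ S', zval (z j)) *
        (∑ S ∈ (N i).powerset.filter (fun S => S.card ≤ β),
          gcoef p S * ∏ j ∈ S, ((zval (z j) - p j) / (p j * (1 - p j)))))) ^ 2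
    ≤ ((din : ℝ) * (dout : ℝ) * Ymax ^ 2 / (n : ℝ)) *
        ((Real.exp 1 * (din : ℝ) / (β : ℝ)) *
          max (4 * (β : ℝ) ^ 2) (1 / (q * (1 - q)))) ^ β := by
  have hp01 : ∀ j, 0 ≤ p j ∧ p j ≤ 1 := fun j => ⟨hq.le.trans (hp j).1, by linarith [hp j]⟩
  have hsub : ∀ i, ∀ S ∈ (N i).powerset.filter (fun S => S.card ≤ β), S ⊆ N i :=
    fun i S hS => mem_powerset.1 (mem_filter.1 hS).1
  have hcard : ∀ i, (#{i' | (N i ∩ N i').Nonempty} : ℝ) ≤ din * dout := fun i => by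
    exact_mod_cast card_filter_inter_nonempty_le N i (hdin i) hdout
  have hvar := bvar_sum_le_of_dependsOn hp01 N _
    (fun i => (dependsOn_sum_mul_prod _ _ _ (hsub i)).mul (dependsOn_sum_mul_prod _ _ _ (hsub i)))
    hcard (fun i => bexp_sq_mul_sum_gcoef_mul_ipw_prod_le hq hp (hdin i) (c i) (hY i))
  rw [Fintype.card_fin, ← one_div] at hvar
  calc _ = (1 / (n : ℝ)) ^ 2 * bvar p _ := bvar_const_mul _ _
    _ ≤ _ := mul_le_mul_of_nonneg_left hvar (sq_nonneg _)
    _ = _ := by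
        rcases eq_or_ne (n : ℝ) 0 with h | h
        · simp [h]
        · field_simp

/-- Variance bound for the SNIPE estimator (Theorem 1 of the paper). -/
theorem stmt13 {n : ℕ} (hn : 0 < n) (p : Fin n → ℝ) (q : ℝ) (hq : 0 < q)
    (hq2 : q ≤ 1 / 2) (hp : ∀ j, q ≤ p j ∧ p j ≤ 1 - q)
    (N : Fin n → Finset (Fin n)) (β din dout : ℕ)
    (hdin : ∀ i, (N i).card ≤ din)
    (hdout : ∀ j, (Finset.univ.filter (fun i => j ∈ N i)).card ≤ dout)
    (c : Fin n → Finset (Fin n) → ℝ) (Ymax : ℝ)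
    (hY : ∀ i, ∑ S' ∈ (N i).powerset.filter (fun S => S.card ≤ β), |c i S'| ≤ Ymax) :
    bexp p (fun z => ((1 / (n : ℝ)) * ∑ i,
        (∑ S' ∈ (N i).powerset.filter (fun S => S.card ≤ β),
          c i S' * ∏ j ∈ S', zval (z j)) *
        (∑ S ∈ (N i).powerset.filter (fun S => S.card ≤ β),
          gcoef p S * ∏ j ∈ S, ((zval (z j) - p j) / (p j * (1 - p j))))) ^ 2)
      - (bexp p (fun z => (1 / (n : ℝ)) * ∑ i,
        (∑ S' ∈ (N i).powerset.filter (fun S => S.card ≤ β),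
          c i S' * ∏ j ∈ S', zval (z j)) *
        (∑ S ∈ (N i).powerset.filter (fun S => S.card ≤ β),
          gcoef p S * ∏ j ∈ S, ((zval (z j) - p j) / (p j * (1 - p j)))))) ^ 2
    ≤ ((din : ℝ) * (dout : ℝ) * Ymax ^ 2 / (n : ℝ)) *
        ((Real.exp 1 * (din : ℝ) / (β : ℝ)) *
          max (4 * (β : ℝ) ^ 2) (1 / (q * (1 - q)))) ^ β :=
  stmt13_general p q hq hp N β din dout hdin hdout c Ymax hY
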